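/- arXiv:2401.15300 — 3 statements merged into one kernel-verified Lean document; each statement's English description precedes it below -/
import Mathlib

section
/- In the complete bipartite graph K_{p,q} (p, q ≥ 1) with parts A of size p and B of size q, the resistance distances are: r(u,v) = 2/q for distinct u, v ∈ A; r(u,v) = 2/p for distinct u, v ∈ B; and r(u,v) = (p+q−1)/(pq) for u ∈ A and v ∈ B. -/
open Matrix Polynomial BigOperators

/-- `Ldag` is the Moore–Penrose inverse of `L`: `L Ldag L = L`, `Ldag L Ldag = Ldag`,
and both `L Ldag` and `Ldag L` are symmetric. -/
def IsMoorePenroseInv {V : Type*} [Fintype V] (L Ldag : Matrix V V ℝ) : Prop :=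
  L * Ldag * L = L ∧ Ldag * L * Ldag = Ldag ∧
    (L * Ldag)ᵀ = L * Ldag ∧ (Ldag * L)ᵀ = Ldag * L

/-- The resistance distance between vertices `i` and `j`, computed from the
Moore–Penrose inverse `Ldag` of the Laplacian: `r(i,j) = Ldag i i + Ldag j j - 2 Ldag i j`. -/
def resDist {V : Type*} (Ldag : Matrix V V ℝ) (i j : V) : ℝ :=
  Ldag i i + Ldag j j - 2 * Ldag i j

/-- The resistance distance matrix `R(G)`. -/
def resMatrix {V : Type*} [DecidableEq V] (Ldag : Matrix V V ℝ) : Matrix V V ℝ :=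
  Matrix.of fun i j => if i = j then 0 else resDist Ldag i j

/-- The resistance transmission `RTr(v) = ∑ u, r(u,v)` of a vertex `v`. -/
def resTrans {V : Type*} [Fintype V] (Ldag : Matrix V V ℝ) (v : V) : ℝ :=
  ∑ u, resDist Ldag u v

/-- The resistance Laplacian matrix `R^L = Diag(RTr) - R`. -/
def resLap {V : Type*} [Fintype V] [DecidableEq V] (Ldag : Matrix V V ℝ) : Matrix V V ℝ :=
  Matrix.diagonal (resTrans Ldag) - resMatrix Ldag

/-- The resistance signless Laplacian matrix `R^Q = Diag(RTr) + R`. -/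
def resSignlessLap {V : Type*} [Fintype V] [DecidableEq V] (Ldag : Matrix V V ℝ) :
    Matrix V V ℝ :=
  Matrix.diagonal (resTrans Ldag) + resMatrix Ldag

instance {V W : Type*} : DecidableRel (completeBipartiteGraph V W).Adj := fun v w => by
  simp only [completeBipartiteGraph_adj]
  infer_instance

/-!
If `L` is symmetric with Moore–Penrose inverse `L†` and `L x = e_i - e_j`, then
`r(i,j) = x_i - x_j`: the resistance is the potential difference produced by a unit current
from `i` to `j`. This uses only `L L† L = L` and the symmetry of `L†`, which follows from the
uniqueness of the Moore–Penrose inverse.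

In `K_{p,q}` these potentials are explicit. For `u ≠ v` in the same part, `e_u - e_v` is an
eigenvector of the Laplacian with eigenvalue the size of the other part, so `r(u,v) = 2/q` resp.
`2/p`. For `u ∈ A`, `v ∈ B` the potential is `x = (e_u - 𝟙_A/p)/q - e_v/p`.
-/

namespace IsMoorePenroseInv

variable {V : Type*} [Fintype V] {L M N : Matrix V V ℝ}

theorem unique (hM : IsMoorePenroseInv L M) (hN : IsMoorePenroseInv L N) : M = N := by
  obtain ⟨hM₁, hM₂, hM₃, hM₄⟩ := hM
  obtain ⟨hN₁, hN₂, hN₃, hN₄⟩ := hN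
  have hL : L * M = L * N := by
    calc L * M = (L * N) * (L * M) := by rw [← mul_assoc, hN₁]
    _ = (L * N)ᵀ * (L * M)ᵀ := by rw [hN₃, hM₃]
    _ = (L * N)ᵀ := by rw [← transpose_mul, ← mul_assoc, hM₁]
    _ = L * N := hN₃
  have hR : M * L = N * L := by
    calc M * L = (M * L) * (N * L) := by rw [mul_assoc, ← mul_assoc L, hN₁]
    _ = (M * L)ᵀ * (N * L)ᵀ := by rw [hM₄, hN₄]
    _ = (N * L)ᵀ := by rw [← transpose_mul, mul_assoc, ← mul_assoc L M L, hM₁]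
    _ = N * L := hN₄
  calc M = M * L * M := hM₂.symm
  _ = N * L * N := by rw [hR, mul_assoc, hL, ← mul_assoc]
  _ = N := hN₂

theorem transpose (hM : IsMoorePenroseInv L M) : IsMoorePenroseInv Lᵀ Mᵀ := by
  obtain ⟨h₁, h₂, h₃, h₄⟩ := hM
  refine ⟨?_, ?_, ?_, ?_⟩
  · rw [← transpose_mul, ← transpose_mul, ← mul_assoc, h₁]
  · rw [← transpose_mul, ← transpose_mul, ← mul_assoc, h₂]
  · rw [← transpose_mul, h₄, h₄]
  · rw [← transpose_mul, h₃, h₃]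

theorem isSymm (hL : L.IsSymm) (hM : IsMoorePenroseInv L M) : M.IsSymm := by
  have hMt := hM.transpose
  rw [hL.eq] at hMt
  exact hMt.unique hM

variable [DecidableEq V]

theorem resDist_eq_sub (hL : L.IsSymm) (hM : IsMoorePenroseInv L M) {i j : V} {x : V → ℝ}
    (hx : L *ᵥ x = Pi.single i 1 - Pi.single j 1) : resDist M i j = x i - x j := by
  set w : V → ℝ := Pi.single i 1 - Pi.single j 1
  have hform : w ⬝ᵥ M *ᵥ w = resDist M i j := by
    simp only [w, resDist, mulVec_sub, mulVec_single, MulOpposite.op_one, one_smul, col_apply,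
      dotProduct_sub, sub_dotProduct, single_dotProduct, one_mul, (hM.isSymm hL).apply j i]
    ring
  calc resDist M i j = w ⬝ᵥ M *ᵥ w := hform.symm
  _ = x ⬝ᵥ (L * M * L) *ᵥ x := by
    rw [← mulVec_mulVec, ← mulVec_mulVec, dotProduct_mulVec x, ← mulVec_transpose, hL.eq, hx]
  _ = x ⬝ᵥ w := by rw [hM.1, hx]
  _ = x i - x j := by simp [w, dotProduct_sub]

theorem resDist_eq_of_mulVec_eq_smul (hL : L.IsSymm) (hM : IsMoorePenroseInv L M) {i j : V}
    (hij : i ≠ j) {c : ℝ} (hc : c ≠ 0)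
    (hw : L *ᵥ (Pi.single i 1 - Pi.single j 1) = c • (Pi.single i 1 - Pi.single j 1)) :
    resDist M i j = 2 / c := by
  rw [hM.resDist_eq_sub hL (x := c⁻¹ • (Pi.single i 1 - Pi.single j 1))
    (by rw [mulVec_smul, hw, smul_smul, inv_mul_cancel₀ hc, one_smul])]
  simp [hij, hij.symm, div_eq_mul_inv, ← two_mul]

end IsMoorePenroseInv

namespace SimpleGraph

variable {α β : Type*} [Fintype α] [Fintype β]

theorem neighborFinset_completeBipartiteGraph_inl (a : α) :
    (completeBipartiteGraph α β).neighborFinset (Sum.inl a) = Finset.univ.map .inr := by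
  ext (_ | _) <;> simp

theorem neighborFinset_completeBipartiteGraph_inr (b : β) :
    (completeBipartiteGraph α β).neighborFinset (Sum.inr b) = Finset.univ.map .inl := by
  ext (_ | _) <;> simp

variable [DecidableEq α] [DecidableEq β]

theorem completeBipartiteGraph_lapMatrix_mulVec_elim {R : Type*} [Ring R]
    (f : α → R) (g : β → R) :
    (completeBipartiteGraph α β).lapMatrix R *ᵥ Sum.elim f g =
      Sum.elim (fun a => Fintype.card β * f a - ∑ b, g b)
        (fun b => Fintype.card α * g b - ∑ a, f a) := by
  ext (a | b) <;>
    simp [lapMatrix_mulVec_apply, ← card_neighborFinset_eq_degree,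
      neighborFinset_completeBipartiteGraph_inl, neighborFinset_completeBipartiteGraph_inr]

end SimpleGraph

section

open SimpleGraph

variable {α β : Type*} [Fintype α] [Fintype β] [DecidableEq α] [DecidableEq β]
  {M : Matrix (α ⊕ β) (α ⊕ β) ℝ}

theorem resDist_completeBipartiteGraph_inl_inl [Nonempty β]
    (hM : IsMoorePenroseInv ((completeBipartiteGraph α β).lapMatrix ℝ) M) {u v : α}
    (huv : u ≠ v) : resDist M (.inl u) (.inl v) = 2 / Fintype.card β := by
  refine hM.resDist_eq_of_mulVec_eq_smul (isSymm_lapMatrix ℝ _) (by simpa using huv)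
    (by simp [Fintype.card_ne_zero]) ?_
  rw [← Sum.elim_single_zero, ← Sum.elim_single_zero, ← Sum.elim_sub_sub]
  ext (a | b) <;> simp [completeBipartiteGraph_lapMatrix_mulVec_elim]

theorem resDist_completeBipartiteGraph_inr_inr [Nonempty α]
    (hM : IsMoorePenroseInv ((completeBipartiteGraph α β).lapMatrix ℝ) M) {u v : β}
    (huv : u ≠ v) : resDist M (.inr u) (.inr v) = 2 / Fintype.card α := by
  refine hM.resDist_eq_of_mulVec_eq_smul (isSymm_lapMatrix ℝ _) (by simpa using huv)
    (by simp [Fintype.card_ne_zero]) ?_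
  rw [← Sum.elim_zero_single, ← Sum.elim_zero_single, ← Sum.elim_sub_sub]
  ext (a | b) <;> simp [completeBipartiteGraph_lapMatrix_mulVec_elim]

theorem resDist_completeBipartiteGraph_inl_inr
    (hM : IsMoorePenroseInv ((completeBipartiteGraph α β).lapMatrix ℝ) M) (u : α) (v : β) :
    resDist M (.inl u) (.inr v) =
      (Fintype.card α + Fintype.card β - 1) / (Fintype.card α * Fintype.card β) := by
  have : Nonempty α := ⟨u⟩
  have : Nonempty β := ⟨v⟩
  have hα : (Fintype.card α : ℝ) ≠ 0 := by simp [Fintype.card_ne_zero]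
  have hβ : (Fintype.card β : ℝ) ≠ 0 := by simp [Fintype.card_ne_zero]
  set x : α ⊕ β → ℝ := Sum.elim
    (fun a => ((Pi.single u 1 : α → ℝ) a - (Fintype.card α : ℝ)⁻¹) / Fintype.card β)
    (fun b => -(Pi.single v 1 : β → ℝ) b / Fintype.card α)
  have hx : (completeBipartiteGraph α β).lapMatrix ℝ *ᵥ x =
      Pi.single (.inl u) 1 - Pi.single (.inr v) 1 := by
    ext (a | b) <;>
      simp [x, completeBipartiteGraph_lapMatrix_mulVec_elim, Finset.sum_sub_distrib,
        ← Finset.sum_div, mul_div_cancel₀, neg_div, one_div, Pi.single_apply, hα, hβ]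
  rw [hM.resDist_eq_sub (isSymm_lapMatrix ℝ _) hx]
  simp only [x, Sum.elim_inl, Sum.elim_inr, Pi.single_eq_same]
  field_simp
  ring

end

theorem resDist_completeBipartite (p q : ℕ) (hp : 1 ≤ p) (hq : 1 ≤ q)
    (Ldag : Matrix (Fin p ⊕ Fin q) (Fin p ⊕ Fin q) ℝ)
    (hpen : IsMoorePenroseInv ((completeBipartiteGraph (Fin p) (Fin q)).lapMatrix ℝ) Ldag) :
    (∀ u v : Fin p, u ≠ v → resDist Ldag (Sum.inl u) (Sum.inl v) = 2 / q) ∧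
    (∀ u v : Fin q, u ≠ v → resDist Ldag (Sum.inr u) (Sum.inr v) = 2 / p) ∧
    (∀ (u : Fin p) (v : Fin q),
      resDist Ldag (Sum.inl u) (Sum.inr v) = ((p : ℝ) + q - 1) / (p * q)) := by
  have : NeZero p := ⟨by omega⟩
  have : NeZero q := ⟨by omega⟩
  refine ⟨fun u v huv => ?_, fun u v huv => ?_, fun u v => ?_⟩
  · simpa using resDist_completeBipartiteGraph_inl_inl hpen huv
  · simpa using resDist_completeBipartiteGraph_inr_inr hpen huv
  · simpa using resDist_completeBipartiteGraph_inl_inr hpen u v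
end

section
/- For the complete bipartite graph K_{p,q} (p, q ≥ 1) with parts A of size p and B of size q, the resistance Laplacian R^L(K_{p,q}) has entries: diagonal entry 2(p−1)/q + (p+q−1)/p for u ∈ A and 2(q−1)/p + (p+q−1)/q for u ∈ B; off-diagonal entry −2/q for distinct u, v ∈ A; −2/p for distinct u, v ∈ B; and −(p+q−1)/(pq) when u ∈ A, v ∈ B. -/
open Matrix Polynomial BigOperators

/-! For symmetric `L`, the transpose of a Moore–Penrose inverse `L†` is again one, so `L†` is
symmetric by uniqueness. Hence if `L x = d` with `d = eᵢ - eⱼ`, then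
`r(i, j) = dᵀ L† d = xᵀ L L† L x = xᵀ d = xᵢ - xⱼ`. On `K_{V,W}` such potentials are explicit:
`(e_a - e_b) / |W|` on `V` for `a, b ∈ V`, and `e_a / |W|` on `V`, `1 / (|V| |W|) - e_b / |V|` on `W`
for `a ∈ V`, `b ∈ W`. Summing the resulting distances gives the transmissions. -/

namespace IsMoorePenroseInv

variable {V : Type*} [Fintype V] {L B C : Matrix V V ℝ}

theorem transpose_s5 (h : IsMoorePenroseInv L B) : IsMoorePenroseInv Lᵀ Bᵀ := by
  obtain ⟨h₁, h₂, h₃, h₄⟩ := h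
  refine ⟨?_, ?_, ?_, ?_⟩
  · rw [← transpose_mul, ← transpose_mul, ← Matrix.mul_assoc, h₁]
  · rw [← transpose_mul, ← transpose_mul, ← Matrix.mul_assoc, h₂]
  · rw [← transpose_mul, h₄, h₄]
  · rw [← transpose_mul, h₃, h₃]

theorem unique_s5 (hB : IsMoorePenroseInv L B) (hC : IsMoorePenroseInv L C) : B = C := by
  obtain ⟨b₁, b₂, b₃, b₄⟩ := hB
  obtain ⟨c₁, c₂, c₃, c₄⟩ := hC
  have hLB : L * B = L * C :=
    calc L * B = (L * C * (L * B))ᵀ := by rw [← Matrix.mul_assoc, c₁, b₃]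
      _ = L * B * (L * C) := by rw [transpose_mul, b₃, c₃]
      _ = L * C := by rw [← Matrix.mul_assoc, b₁]
  have hBL : B * L = C * L :=
    calc B * L = (B * L * (C * L))ᵀ := by
          rw [← Matrix.mul_assoc, Matrix.mul_assoc B, Matrix.mul_assoc B, c₁, b₄]
      _ = C * L * (B * L) := by rw [transpose_mul, b₄, c₄]
      _ = C * L := by rw [Matrix.mul_assoc, ← Matrix.mul_assoc L, b₁]
  calc B = B * L * B := b₂.symm
    _ = C * L * C := by rw [Matrix.mul_assoc, hLB, ← Matrix.mul_assoc, hBL]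
    _ = C := c₂

theorem transpose_eq_self (hL : L.IsSymm) (h : IsMoorePenroseInv L B) : Bᵀ = B :=
  (hL.eq ▸ h.transpose_s5).unique_s5 h

end IsMoorePenroseInv

section resDist

variable {V : Type*} {B : Matrix V V ℝ}

theorem resDist_self (v : V) : resDist B v v = 0 := by
  rw [resDist]; ring

theorem resDist_comm (hB : Bᵀ = B) (i j : V) : resDist B i j = resDist B j i := by
  rw [resDist, resDist, ← transpose_apply B j i, hB]; ring

theorem IsMoorePenroseInv.resDist_eq_of_mulVec_eq [Fintype V] [DecidableEq V]
    {L : Matrix V V ℝ} (hL : L.IsSymm) (h : IsMoorePenroseInv L B) {i j : V} {x : V → ℝ}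
    (hx : L *ᵥ x = Pi.single i 1 - Pi.single j 1) : resDist B i j = x i - x j := by
  set d : V → ℝ := Pi.single i 1 - Pi.single j 1
  have hquad : d ⬝ᵥ (B *ᵥ d) = B i i + B j j - B i j - B j i := by
    simp only [d, mulVec_sub, mulVec_single_one, sub_dotProduct, single_one_dotProduct,
      Pi.sub_apply, col_apply]
    ring
  have hpot : d ⬝ᵥ (B *ᵥ d) = x i - x j :=
    calc d ⬝ᵥ (B *ᵥ d) = x ⬝ᵥ (Lᵀ *ᵥ (B *ᵥ (L *ᵥ x))) := by
          rw [dotProduct_mulVec x Lᵀ, vecMul_transpose, hx]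
      _ = x ⬝ᵥ ((Lᵀ * B * L) *ᵥ x) := by rw [mulVec_mulVec, mulVec_mulVec]
      _ = x i - x j := by
          rw [hL.eq, h.1, hx, dotProduct_sub, dotProduct_single_one, dotProduct_single_one]
  have hji : B j i = B i j := by rw [← transpose_apply B i j, h.transpose_eq_self hL]
  rw [resDist]
  linarith

end resDist

section resLap

variable {V : Type*} [Fintype V] [DecidableEq V] (B : Matrix V V ℝ)

theorem resLap_apply_self (v : V) : resLap B v v = resTrans B v := by
  simp [resLap, resMatrix]

theorem resLap_apply_of_ne {i j : V} (h : i ≠ j) : resLap B i j = -resDist B i j := by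
  simp [resLap, resMatrix, h]

end resLap

section completeBipartiteGraph

open Fintype

variable {V W : Type*} [Fintype V] [Fintype W] [DecidableEq V] [DecidableEq W]

theorem completeBipartiteGraph_lapMatrix_mulVec_inl (x : V ⊕ W → ℝ) (v : V) :
    ((completeBipartiteGraph V W).lapMatrix ℝ *ᵥ x) (Sum.inl v) =
      card W * x (Sum.inl v) - ∑ w, x (Sum.inr w) := by
  have hN : (completeBipartiteGraph V W).neighborFinset (Sum.inl v) =
      Finset.univ.map Function.Embedding.inr := by
    ext w; cases w <;> simp
  rw [SimpleGraph.lapMatrix_mulVec_apply, ← SimpleGraph.card_neighborFinset_eq_degree, hN,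
    Finset.card_map, Finset.card_univ, Finset.sum_map]
  rfl

theorem completeBipartiteGraph_lapMatrix_mulVec_inr (x : V ⊕ W → ℝ) (w : W) :
    ((completeBipartiteGraph V W).lapMatrix ℝ *ᵥ x) (Sum.inr w) =
      card V * x (Sum.inr w) - ∑ v, x (Sum.inl v) := by
  have hN : (completeBipartiteGraph V W).neighborFinset (Sum.inr w) =
      Finset.univ.map Function.Embedding.inl := by
    ext v; cases v <;> simp
  rw [SimpleGraph.lapMatrix_mulVec_apply, ← SimpleGraph.card_neighborFinset_eq_degree, hN,
    Finset.card_map, Finset.card_univ, Finset.sum_map]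
  rfl

variable {B : Matrix (V ⊕ W) (V ⊕ W) ℝ}
  (hB : IsMoorePenroseInv ((completeBipartiteGraph V W).lapMatrix ℝ) B)
include hB

theorem resDist_inl_inl_of_ne (hW : card W ≠ 0) {a b : V} (hab : a ≠ b) :
    resDist B (Sum.inl a) (Sum.inl b) = 2 / card W := by
  have hx : (completeBipartiteGraph V W).lapMatrix ℝ *ᵥ
      Sum.elim (fun u ↦ ((if u = a then 1 else 0) - if u = b then 1 else 0) / card W) 0 =
      Pi.single (Sum.inl a) 1 - Pi.single (Sum.inl b) 1 := by
    ext (u | w)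
    · rw [completeBipartiteGraph_lapMatrix_mulVec_inl]
      simp only [Sum.elim_inl, Sum.elim_inr, Pi.zero_apply, Finset.sum_const_zero, sub_zero,
        Pi.sub_apply, Pi.single_apply, Sum.inl.injEq]
      field_simp
    · rw [completeBipartiteGraph_lapMatrix_mulVec_inr]
      simp [← Finset.sum_div]
  rw [hB.resDist_eq_of_mulVec_eq (SimpleGraph.isSymm_lapMatrix ℝ _) hx]
  simp only [Sum.elim_inl, ↓reduceIte, hab, hab.symm, sub_zero, zero_sub]
  ring

theorem resDist_inr_inr_of_ne (hV : card V ≠ 0) {a b : W} (hab : a ≠ b) :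
    resDist B (Sum.inr a) (Sum.inr b) = 2 / card V := by
  have hx : (completeBipartiteGraph V W).lapMatrix ℝ *ᵥ
      Sum.elim 0 (fun w ↦ ((if w = a then 1 else 0) - if w = b then 1 else 0) / card V) =
      Pi.single (Sum.inr a) 1 - Pi.single (Sum.inr b) 1 := by
    ext (v | w)
    · rw [completeBipartiteGraph_lapMatrix_mulVec_inl]
      simp [← Finset.sum_div]
    · rw [completeBipartiteGraph_lapMatrix_mulVec_inr]
      simp only [Sum.elim_inr, Sum.elim_inl, Pi.zero_apply, Finset.sum_const_zero, sub_zero,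
        Pi.sub_apply, Pi.single_apply, Sum.inr.injEq]
      field_simp
  rw [hB.resDist_eq_of_mulVec_eq (SimpleGraph.isSymm_lapMatrix ℝ _) hx]
  simp only [Sum.elim_inr, ↓reduceIte, hab, hab.symm, sub_zero, zero_sub]
  ring

theorem resDist_inl_inr (hV : card V ≠ 0) (hW : card W ≠ 0) (a : V) (b : W) :
    resDist B (Sum.inl a) (Sum.inr b) = (card V + card W - 1) / (card V * card W) := by
  have hx : (completeBipartiteGraph V W).lapMatrix ℝ *ᵥ
      Sum.elim (fun v ↦ (if v = a then 1 else 0) / card W)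
        (fun w ↦ 1 / (card V * card W) - (if w = b then 1 else 0) / card V) =
      Pi.single (Sum.inl a) 1 - Pi.single (Sum.inr b) 1 := by
    ext (v | w)
    · rw [completeBipartiteGraph_lapMatrix_mulVec_inl]
      simp only [Sum.elim_inl, Sum.elim_inr, Finset.sum_sub_distrib, Finset.sum_const,
        Finset.card_univ, nsmul_eq_mul, ← Finset.sum_div, Finset.sum_ite_eq', Finset.mem_univ,
        ↓reduceIte, Pi.sub_apply, Pi.single_apply, Sum.inl.injEq, reduceCtorEq, sub_zero]
      field_simp
      ring
    · rw [completeBipartiteGraph_lapMatrix_mulVec_inr]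
      simp only [Sum.elim_inr, Sum.elim_inl, ← Finset.sum_div, Finset.sum_ite_eq',
        Finset.mem_univ, ↓reduceIte, Pi.sub_apply, Pi.single_apply, Sum.inr.injEq, reduceCtorEq,
        zero_sub]
      field_simp
      ring
  rw [hB.resDist_eq_of_mulVec_eq (SimpleGraph.isSymm_lapMatrix ℝ _) hx]
  simp only [Sum.elim_inl, Sum.elim_inr, ↓reduceIte]
  field_simp
  ring

theorem resTrans_inl (hV : card V ≠ 0) (hW : card W ≠ 0) (v : V) :
    resTrans B (Sum.inl v) = 2 * (card V - 1) / card W + (card V + card W - 1) / card V := by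
  have hsame (u : V) : resDist B (Sum.inl u) (Sum.inl v) =
      2 / card W - if u = v then (2 / card W : ℝ) else 0 := by
    split_ifs with h
    · rw [h, resDist_self, sub_self]
    · rw [resDist_inl_inl_of_ne hB hW h, sub_zero]
  have hother (w : W) : resDist B (Sum.inr w) (Sum.inl v) =
      (card V + card W - 1) / (card V * card W) := by
    rw [resDist_comm (hB.transpose_eq_self (SimpleGraph.isSymm_lapMatrix ℝ _)),
      resDist_inl_inr hB hV hW]
  rw [resTrans, Fintype.sum_sum_type]
  simp only [hsame, hother, Finset.sum_sub_distrib, Finset.sum_const, Finset.sum_ite_eq',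
    Finset.mem_univ, if_true, Finset.card_univ, nsmul_eq_mul]
  field_simp

theorem resTrans_inr (hV : card V ≠ 0) (hW : card W ≠ 0) (w : W) :
    resTrans B (Sum.inr w) = 2 * (card W - 1) / card V + (card V + card W - 1) / card W := by
  have hsame (u : W) : resDist B (Sum.inr u) (Sum.inr w) =
      2 / card V - if u = w then (2 / card V : ℝ) else 0 := by
    split_ifs with h
    · rw [h, resDist_self, sub_self]
    · rw [resDist_inr_inr_of_ne hB hV h, sub_zero]
  rw [resTrans, Fintype.sum_sum_type]
  simp only [hsame, resDist_inl_inr hB hV hW, Finset.sum_sub_distrib, Finset.sum_const,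
    Finset.sum_ite_eq', Finset.mem_univ, if_true, Finset.card_univ, nsmul_eq_mul]
  field_simp
  ring

end completeBipartiteGraph

theorem resLap_completeBipartite (p q : ℕ) (hp : 1 ≤ p) (hq : 1 ≤ q)
    (Ldag : Matrix (Fin p ⊕ Fin q) (Fin p ⊕ Fin q) ℝ)
    (hpen : IsMoorePenroseInv ((completeBipartiteGraph (Fin p) (Fin q)).lapMatrix ℝ) Ldag) :
    (∀ u : Fin p, resLap Ldag (Sum.inl u) (Sum.inl u) =
      2 * ((p : ℝ) - 1) / q + ((p : ℝ) + q - 1) / p) ∧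
    (∀ u : Fin q, resLap Ldag (Sum.inr u) (Sum.inr u) =
      2 * ((q : ℝ) - 1) / p + ((p : ℝ) + q - 1) / q) ∧
    (∀ u v : Fin p, u ≠ v → resLap Ldag (Sum.inl u) (Sum.inl v) = -(2 / q)) ∧
    (∀ u v : Fin q, u ≠ v → resLap Ldag (Sum.inr u) (Sum.inr v) = -(2 / p)) ∧
    (∀ (u : Fin p) (v : Fin q),
      resLap Ldag (Sum.inl u) (Sum.inr v) = -(((p : ℝ) + q - 1) / (p * q))) := by
  have hP : Fintype.card (Fin p) ≠ 0 := by rw [Fintype.card_fin]; omega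
  have hQ : Fintype.card (Fin q) ≠ 0 := by rw [Fintype.card_fin]; omega
  refine ⟨fun u ↦ ?_, fun u ↦ ?_, fun u v huv ↦ ?_, fun u v huv ↦ ?_, fun u v ↦ ?_⟩
  · rw [resLap_apply_self, resTrans_inl hpen hP hQ, Fintype.card_fin, Fintype.card_fin]
  · rw [resLap_apply_self, resTrans_inr hpen hP hQ, Fintype.card_fin, Fintype.card_fin]
  · rw [resLap_apply_of_ne _ (Sum.inl_injective.ne huv), resDist_inl_inl_of_ne hpen hQ huv,
      Fintype.card_fin]
  · rw [resLap_apply_of_ne _ (Sum.inr_injective.ne huv), resDist_inr_inr_of_ne hpen hP huv,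
      Fintype.card_fin]
  · rw [resLap_apply_of_ne _ Sum.inl_ne_inr, resDist_inl_inr hpen hP hQ, Fintype.card_fin,
      Fintype.card_fin]
end

section
/- For the complete bipartite graph K_{p,q} (p, q ≥ 1), the eigenvalues of the resistance Laplacian R^L(K_{p,q}), counted with multiplicity, are: 0 with multiplicity 1; ((p+q)² − p − q)/(pq) with multiplicity 1; 2p/q + (p+q−1)/p with multiplicity p−1; and 2q/p + (p+q−1)/q with multiplicity q−1. -/
open Matrix Polynomial BigOperators

/-!
For the bipartition `σ : Fin p ⊕ Fin q → Fin 2`, every matrix in the argument has the form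
`M = diag (d (σ i)) - (c (σ i) (σ j))` with `d : Fin 2 → ℝ` and `c` a `2 × 2` matrix, and such
matrices are closed under products. So the Moore–Penrose inverse of `L(K_{p,q})`, which is
unique, can be guessed and verified inside this class; it gives resistance distances `2/q` and
`2/p` within the two sides and `(p + q - 1)/(pq)` across them.

For such an `M`, `X - M = D + U c Uᵀ` with `D` diagonal and `U` the indicator matrix of the sides.
The matrix determinant lemma reduces `det (X - M)` to `det D` times a `2 × 2` determinant, which
is, up to the factor `(X - d 0) (X - d 1)`, the characteristic polynomial of the quotient matrix
`diag d - c * diag (p, q)`. For `R^L(K_{p,q})` this quotient matrix has zero row sums and trace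
`((p + q)² - p - q)/(pq)`.
-/

open Finset

section FiberCard

variable {κ ι : Type*} [Fintype κ] [DecidableEq ι]

def fiberCard (blk : κ → ι) (l : ι) : ℕ := #{k | blk k = l}

@[to_additive]
theorem prod_comp_eq_prod_pow_fiberCard [Fintype ι] {M : Type*} [CommMonoid M] (blk : κ → ι)
    (g : ι → M) : ∏ k, g (blk k) = ∏ l, g l ^ fiberCard blk l := by
  simp_rw [← prod_fiberwise' univ blk g, prod_const]
  rfl

end FiberCard

namespace Matrix

variable {κ ι : Type*} [Fintype ι] [DecidableEq ι]

def blockConstMatrix [DecidableEq κ] {R : Type*} [Ring R] (blk : κ → ι) (d : ι → R)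
    (c : Matrix ι ι R) : Matrix κ κ R :=
  diagonal (d ∘ blk) - c.submatrix blk blk

/-- The quotient matrix of `blockConstMatrix blk d c` for the equitable partition `blk`: its
`(k, l)` entry is the sum of the entries of a row in block `k` over the columns in block `l`. -/
def quotientMatrix [Fintype κ] {R : Type*} [Ring R] (blk : κ → ι) (d : ι → R)
    (c : Matrix ι ι R) : Matrix ι ι R :=
  diagonal d - c * diagonal (fun l => (fiberCard blk l : R))

section CommRing

variable {R : Type*} [CommRing R] (blk : κ → ι)

theorem submatrix_mul_submatrix [Fintype κ] (c f : Matrix ι ι R) :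
    c.submatrix blk blk * f.submatrix blk blk =
      (c * diagonal (fun l => (fiberCard blk l : R)) * f).submatrix blk blk := by
  ext i j
  rw [submatrix_apply, mul_apply, mul_apply]
  simp_rw [mul_diagonal, submatrix_apply]
  rw [sum_comp_eq_sum_nsmul_fiberCard blk (fun l => c (blk i) l * f l (blk j))]
  simp only [nsmul_eq_mul]
  exact sum_congr rfl fun l _ => by ring

theorem blockConstMatrix_mul [Fintype κ] [DecidableEq κ] (d e : ι → R) (c f : Matrix ι ι R) :
    blockConstMatrix blk d c * blockConstMatrix blk e f =
      blockConstMatrix blk (d * e)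
        (diagonal d * f + c * diagonal e - c * diagonal (fun l => (fiberCard blk l : R)) * f) := by
  simp only [blockConstMatrix, sub_mul, mul_sub, diagonal_mul_diagonal, submatrix_mul_submatrix]
  ext i j
  simp only [Function.comp_apply, sub_apply, add_apply, diagonal_apply, mul_diagonal,
    diagonal_mul, submatrix_apply, Pi.mul_apply]
  ring

theorem submatrix_eq_mul_mul_transpose (c : Matrix ι ι R) :
    c.submatrix blk blk =
      (1 : Matrix ι ι R).submatrix blk id * c * ((1 : Matrix ι ι R).submatrix blk id)ᵀ := by
  ext i j
  simp [mul_apply, one_apply]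

theorem transpose_mul_diagonal_mul_submatrix_one [Fintype κ] [DecidableEq κ] (g : ι → R) :
    ((1 : Matrix ι ι R).submatrix blk id)ᵀ * diagonal (g ∘ blk) *
        (1 : Matrix ι ι R).submatrix blk id =
      diagonal (fun l => (fiberCard blk l : R) * g l) := by
  ext l m
  rw [mul_apply]
  simp_rw [mul_diagonal, transpose_apply, submatrix_apply, one_apply, Function.comp_apply, id]
  rw [sum_comp_eq_sum_nsmul_fiberCard blk
    (fun x => (if x = l then 1 else 0) * g x * if x = m then (1 : R) else 0)]
  by_cases h : l = m
  · simp [h]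
  · simp [h, Ne.symm h]

end CommRing

/-- Matrix determinant lemma with `U = (1 : Matrix ι ι F).submatrix blk id`, the indicator matrix
of the blocks. -/
theorem prod_mul_det_blockConstMatrix [Fintype κ] [DecidableEq κ] {F : Type*} [Field F]
    (blk : κ → ι) (D : ι → F) (hD : ∀ l, D l ≠ 0) (c : Matrix ι ι F) :
    (∏ l, D l) * (blockConstMatrix blk D c).det =
      (∏ l, D l ^ fiberCard blk l) * (quotientMatrix blk D c).det := by
  set U := (1 : Matrix ι ι F).submatrix blk id
  have hunit : IsUnit (diagonal (D ∘ blk)).det := by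
    simpa [det_diagonal, prod_ne_zero_iff] using fun k => hD (blk k)
  have hsplit : blockConstMatrix blk D c = diagonal (D ∘ blk) + U * (-c * Uᵀ) := by
    rw [blockConstMatrix, submatrix_eq_mul_mul_transpose, sub_eq_add_neg]
    simp only [Matrix.mul_neg, Matrix.neg_mul, Matrix.mul_assoc, U]
  have hinv : (diagonal (D ∘ blk))⁻¹ = diagonal ((fun l => (D l)⁻¹) ∘ blk) :=
    inv_eq_left_inv (by simp [hD])
  have hquot : quotientMatrix blk D c =
      (1 + -c * diagonal (fun l => (fiberCard blk l : F) * (D l)⁻¹)) * diagonal D := by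
    rw [quotientMatrix, add_mul, Matrix.one_mul, Matrix.mul_assoc, diagonal_mul_diagonal]
    simp [hD, sub_eq_add_neg]
  rw [hsplit, det_add_mul _ _ hunit, hinv, Matrix.mul_assoc (-c), Matrix.mul_assoc (-c),
    transpose_mul_diagonal_mul_submatrix_one, hquot, det_mul, det_diagonal, det_diagonal]
  simp only [Function.comp_apply, prod_comp_eq_prod_pow_fiberCard blk D]
  ring

section Charpoly

variable (blk : κ → ι)

omit [Fintype ι] [DecidableEq ι] in
theorem blockConstMatrix_map [DecidableEq κ] {R S : Type*} [Ring R] [Ring S] (f : R →+* S)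
    (d : ι → R) (c : Matrix ι ι R) :
    (blockConstMatrix blk d c).map f = blockConstMatrix blk (f ∘ d) (c.map f) := by
  ext i j
  by_cases h : i = j <;> simp [blockConstMatrix, h]

theorem quotientMatrix_map [Fintype κ] {R S : Type*} [Ring R] [Ring S] (f : R →+* S)
    (d : ι → R) (c : Matrix ι ι R) :
    (quotientMatrix blk d c).map f = quotientMatrix blk (f ∘ d) (c.map f) := by
  ext i j
  by_cases h : i = j <;> simp [quotientMatrix, h, mul_diagonal]

omit [Fintype ι] [DecidableEq ι] in
theorem charmatrix_blockConstMatrix [Fintype κ] [DecidableEq κ] {R : Type*} [CommRing R]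
    (d : ι → R) (c : Matrix ι ι R) :
    charmatrix (blockConstMatrix blk d c) =
      blockConstMatrix blk (fun l => X - C (d l)) (-c.map C) := by
  ext i j : 1
  by_cases h : i = j
  · simp [blockConstMatrix, h, sub_add]
  · simp [blockConstMatrix, h]

theorem charmatrix_quotientMatrix [Fintype κ] {R : Type*} [CommRing R] (d : ι → R)
    (c : Matrix ι ι R) :
    charmatrix (quotientMatrix blk d c) =
      quotientMatrix blk (fun l => X - C (d l)) (-c.map C) := by
  ext i j : 1
  by_cases h : i = j
  · simp [quotientMatrix, h, mul_diagonal, sub_add]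
  · simp [quotientMatrix, h, mul_diagonal]

theorem prod_mul_charpoly_blockConstMatrix [Fintype κ] [DecidableEq κ] {K : Type*} [Field K]
    (d : ι → K) (c : Matrix ι ι K) :
    (∏ l, (X - C (d l))) * (blockConstMatrix blk d c).charpoly =
      (∏ l, (X - C (d l)) ^ fiberCard blk l) * (quotientMatrix blk d c).charpoly := by
  apply IsFractionRing.injective K[X] (FractionRing K[X])
  simp only [map_mul, map_prod, map_pow, charpoly, RingHom.map_det, RingHom.mapMatrix_apply,
    charmatrix_blockConstMatrix, charmatrix_quotientMatrix, blockConstMatrix_map,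
    quotientMatrix_map]
  exact prod_mul_det_blockConstMatrix blk _
    (fun l => (map_ne_zero_iff _ (IsFractionRing.injective _ _)).2 (X_sub_C_ne_zero (d l))) _

end Charpoly

end Matrix

theorem IsMoorePenroseInv.unique_s6 {V : Type*} [Fintype V] {L X Y : Matrix V V ℝ}
    (hX : IsMoorePenroseInv L X) (hY : IsMoorePenroseInv L Y) : X = Y := by
  obtain ⟨hX1, hX2, hX3, hX4⟩ := hX
  obtain ⟨hY1, hY2, hY3, hY4⟩ := hY
  have hXLY : X = X * L * Y := calc
    X = X * (L * X)ᵀ := by rw [hX3, ← Matrix.mul_assoc, hX2]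
    _ = X * (L * Y * L * X)ᵀ := by rw [hY1]
    _ = X * (L * X)ᵀ * (L * Y)ᵀ := by simp only [transpose_mul, Matrix.mul_assoc]
    _ = X * L * Y := by rw [hX3, hY3, ← Matrix.mul_assoc X L X, hX2, Matrix.mul_assoc]
  have hYLX : Y = X * L * Y := calc
    Y = (Y * L)ᵀ * Y := by rw [hY4, hY2]
    _ = (Y * (L * X * L))ᵀ * Y := by rw [hX1]
    _ = (X * L)ᵀ * (Y * L)ᵀ * Y := by simp only [transpose_mul, Matrix.mul_assoc]
    _ = X * L * Y := by rw [hX4, hY4, Matrix.mul_assoc, hY2]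
  rw [hXLY, ← hYLX]

theorem isMoorePenroseInv_of_mul_eq {V : Type*} [Fintype V] {L X P : Matrix V V ℝ}
    (hLX : L * X = P) (hXL : X * L = P) (hP : Pᵀ = P) (hPL : P * L = L) (hXP : X * P = X) :
    IsMoorePenroseInv L X :=
  ⟨by rw [hLX, hPL], by rw [Matrix.mul_assoc, hLX, hXP], by rw [hLX, hP], by rw [hXL, hP]⟩

theorem resDist_blockConstMatrix {V ι : Type*} [DecidableEq V] (blk : V → ι) (e : ι → ℝ)
    (f : Matrix ι ι ℝ) {i j : V} (hij : i ≠ j) :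
    resDist (blockConstMatrix blk e f) i j =
      e (blk i) + e (blk j) - f (blk i) (blk i) - f (blk j) (blk j) + 2 * f (blk i) (blk j) := by
  simp only [resDist, blockConstMatrix, Matrix.sub_apply, diagonal_apply_eq,
    diagonal_apply_ne _ hij, Function.comp_apply, submatrix_apply]
  ring

theorem resLap_eq_blockConstMatrix {V ι : Type*} [Fintype V] [DecidableEq V] [Fintype ι]
    [DecidableEq ι] {Ldag : Matrix V V ℝ} (blk : V → ι) (ρ : Matrix ι ι ℝ)
    (hρ : ∀ i j, i ≠ j → resDist Ldag i j = ρ (blk i) (blk j)) :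
    resLap Ldag = blockConstMatrix blk (fun l => ∑ m, (fiberCard blk m : ℝ) * ρ m l) ρ := by
  have hdist (u v : V) :
      resDist Ldag u v = ρ (blk u) (blk v) - if u = v then ρ (blk v) (blk v) else 0 := by
    by_cases h : u = v
    · simp only [h, resDist, if_true]; ring
    · simp [h, hρ u v h]
  have htrans (v : V) :
      resTrans Ldag v = ∑ m, (fiberCard blk m : ℝ) * ρ m (blk v) - ρ (blk v) (blk v) := by
    simp only [resTrans, hdist, sum_sub_distrib, sum_ite_eq', mem_univ, if_true,
      sum_comp_eq_sum_nsmul_fiberCard blk (fun m => ρ m (blk v)), nsmul_eq_mul]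
  ext i j
  by_cases h : i = j
  · simp [resLap, blockConstMatrix, resMatrix, htrans, h]
  · simp [resLap, blockConstMatrix, resMatrix, h, hρ i j h]

section CompleteBipartite

variable {V W : Type*} [Fintype V] [Fintype W]

def bipartition : V ⊕ W → Fin 2 := Sum.elim 0 1

theorem fiberCard_bipartition :
    fiberCard (bipartition : V ⊕ W → Fin 2) = ![Fintype.card V, Fintype.card W] := by
  funext l
  rw [fiberCard, card_filter, Fintype.sum_sum_type]
  fin_cases l <;> simp [bipartition]

theorem completeBipartiteGraph_degree_inl (v : V) :
    (completeBipartiteGraph V W).degree (Sum.inl v) = Fintype.card W := by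
  have : (completeBipartiteGraph V W).neighborFinset (Sum.inl v) =
      univ.map Function.Embedding.inr := by
    ext (v' | w) <;> simp
  rw [← SimpleGraph.card_neighborFinset_eq_degree, this, card_map, card_univ]

theorem completeBipartiteGraph_degree_inr (w : W) :
    (completeBipartiteGraph V W).degree (Sum.inr w) = Fintype.card V := by
  have : (completeBipartiteGraph V W).neighborFinset (Sum.inr w) =
      univ.map Function.Embedding.inl := by
    ext (v | w') <;> simp
  rw [← SimpleGraph.card_neighborFinset_eq_degree, this, card_map, card_univ]

theorem lapMatrix_completeBipartiteGraph [DecidableEq V] [DecidableEq W] {R : Type*} [Ring R] :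
    (completeBipartiteGraph V W).lapMatrix R =
      blockConstMatrix bipartition ![(Fintype.card W : R), Fintype.card V] !![0, 1; 1, 0] := by
  ext (v | w) (v' | w') <;>
    simp [SimpleGraph.lapMatrix, SimpleGraph.degMatrix, SimpleGraph.adjMatrix_apply,
      blockConstMatrix, bipartition, completeBipartiteGraph_degree_inl,
      completeBipartiteGraph_degree_inr, diagonal_apply]

end CompleteBipartite

section CompleteBipartiteFin

variable {p q : ℕ}

noncomputable def completeBipartiteLapPinv (p q : ℕ) :
    Matrix (Fin p ⊕ Fin q) (Fin p ⊕ Fin q) ℝ :=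
  blockConstMatrix bipartition ![(q : ℝ)⁻¹, (p : ℝ)⁻¹]
    !![1 / (q * (p + q)) + 1 / (p + q) ^ 2, 1 / (p + q) ^ 2;
      1 / (p + q) ^ 2, 1 / (p * (p + q)) + 1 / (p + q) ^ 2]

noncomputable def completeBipartiteResDist (p q : ℕ) : Matrix (Fin 2) (Fin 2) ℝ :=
  !![2 / (q : ℝ), (p + q - 1) / (p * q); (p + q - 1) / (p * q), 2 / (p : ℝ)]

theorem isMoorePenroseInv_completeBipartiteLapPinv (hp : p ≠ 0) (hq : q ≠ 0) :
    IsMoorePenroseInv ((completeBipartiteGraph (Fin p) (Fin q)).lapMatrix ℝ)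
      (completeBipartiteLapPinv p q) := by
  have hp' : (p : ℝ) ≠ 0 := Nat.cast_ne_zero.2 hp
  have hq' : (q : ℝ) ≠ 0 := Nat.cast_ne_zero.2 hq
  have hn : (p : ℝ) + q ≠ 0 := by positivity
  -- `P = 1 - J / (p + q)`, the orthogonal projection onto the sum-zero vectors
  have hP : (blockConstMatrix bipartition 1 (of fun _ _ => ((p : ℝ) + q)⁻¹) :
      Matrix (Fin p ⊕ Fin q) (Fin p ⊕ Fin q) ℝ)ᵀ =
      blockConstMatrix bipartition 1 (of fun _ _ => ((p : ℝ) + q)⁻¹) := by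
    ext i j
    simp [blockConstMatrix, one_apply, eq_comm]
  rw [lapMatrix_completeBipartiteGraph, completeBipartiteLapPinv]
  refine isMoorePenroseInv_of_mul_eq ?_ ?_ hP ?_ ?_
  all_goals
    rw [blockConstMatrix_mul, fiberCard_bipartition]
    congr 1
    · ext k
      fin_cases k <;> simp <;> field_simp
    · ext k l
      fin_cases k <;> fin_cases l <;> simp [-cons_mul, mul_apply, Fin.sum_univ_two] <;>
        field_simp <;> ring

theorem resDist_completeBipartiteLapPinv (hp : p ≠ 0) (hq : q ≠ 0) {i j : Fin p ⊕ Fin q}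
    (hij : i ≠ j) :
    resDist (completeBipartiteLapPinv p q) i j =
      completeBipartiteResDist p q (bipartition i) (bipartition j) := by
  have hp' : (p : ℝ) ≠ 0 := Nat.cast_ne_zero.2 hp
  have hq' : (q : ℝ) ≠ 0 := Nat.cast_ne_zero.2 hq
  have hn : (p : ℝ) + q ≠ 0 := by positivity
  rw [completeBipartiteLapPinv, resDist_blockConstMatrix _ _ _ hij]
  generalize bipartition i = k
  generalize bipartition j = l
  fin_cases k <;> fin_cases l <;> simp [completeBipartiteResDist] <;> field_simp <;> ring

theorem resLap_completeBipartiteLapPinv (hp : p ≠ 0) (hq : q ≠ 0) :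
    resLap (completeBipartiteLapPinv p q) =
      blockConstMatrix bipartition
        ![2 * (p : ℝ) / q + ((p : ℝ) + q - 1) / p, 2 * (q : ℝ) / p + ((p : ℝ) + q - 1) / q]
        (completeBipartiteResDist p q) := by
  have hp' : (p : ℝ) ≠ 0 := Nat.cast_ne_zero.2 hp
  have hq' : (q : ℝ) ≠ 0 := Nat.cast_ne_zero.2 hq
  rw [resLap_eq_blockConstMatrix _ _ fun i j => resDist_completeBipartiteLapPinv hp hq]
  congr 1
  ext l
  fin_cases l <;>
    simp only [completeBipartiteResDist, fiberCard_bipartition, Fintype.card_fin, Fin.sum_univ_two,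
      of_apply, cons_val', cons_val_zero, cons_val_one, cons_val_fin_one, Fin.zero_eta, Fin.mk_one]
  · field_simp
  · field_simp
    ring

theorem charpoly_quotientMatrix_completeBipartiteResDist (hp : p ≠ 0) (hq : q ≠ 0) :
    (quotientMatrix (bipartition : Fin p ⊕ Fin q → Fin 2)
        ![2 * (p : ℝ) / q + ((p : ℝ) + q - 1) / p, 2 * (q : ℝ) / p + ((p : ℝ) + q - 1) / q]
        (completeBipartiteResDist p q)).charpoly =
      X * (X - C ((((p : ℝ) + q) ^ 2 - p - q) / (p * q))) := by
  have hp' : (p : ℝ) ≠ 0 := Nat.cast_ne_zero.2 hp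
  have hq' : (q : ℝ) ≠ 0 := Nat.cast_ne_zero.2 hq
  set Q := quotientMatrix (bipartition : Fin p ⊕ Fin q → Fin 2)
    ![2 * (p : ℝ) / q + ((p : ℝ) + q - 1) / p, 2 * (q : ℝ) / p + ((p : ℝ) + q - 1) / q]
    (completeBipartiteResDist p q)
  have htrace : Q.trace = (((p : ℝ) + q) ^ 2 - p - q) / (p * q) := by
    simp [Q, -cons_mul, quotientMatrix, completeBipartiteResDist, trace_fin_two,
      fiberCard_bipartition, mul_apply, Fin.sum_univ_two]
    field_simp
    ring
  have hdet : Q.det = 0 := by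
    simp [Q, -cons_mul, quotientMatrix, completeBipartiteResDist, det_fin_two,
      fiberCard_bipartition, mul_apply, Fin.sum_univ_two]
    field_simp
    ring
  rw [charpoly_fin_two, htrace, hdet, map_zero, add_zero]
  ring

end CompleteBipartiteFin

theorem resLap_completeBipartite_eigenvalues (p q : ℕ) (hp : 1 ≤ p) (hq : 1 ≤ q)
    (Ldag : Matrix (Fin p ⊕ Fin q) (Fin p ⊕ Fin q) ℝ)
    (hpen : IsMoorePenroseInv ((completeBipartiteGraph (Fin p) (Fin q)).lapMatrix ℝ) Ldag) :
    (resLap Ldag).charpoly =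
      X * (X - C ((((p : ℝ) + q) ^ 2 - p - q) / (p * q))) *
        (X - C (2 * (p : ℝ) / q + ((p : ℝ) + q - 1) / p)) ^ (p - 1) *
        (X - C (2 * (q : ℝ) / p + ((p : ℝ) + q - 1) / q)) ^ (q - 1) := by
  have hp0 : p ≠ 0 := by omega
  have hq0 : q ≠ 0 := by omega
  obtain rfl := hpen.unique_s6 (isMoorePenroseInv_completeBipartiteLapPinv hp0 hq0)
  have key := prod_mul_charpoly_blockConstMatrix (bipartition : Fin p ⊕ Fin q → Fin 2)
    ![2 * (p : ℝ) / q + ((p : ℝ) + q - 1) / p, 2 * (q : ℝ) / p + ((p : ℝ) + q - 1) / q]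
    (completeBipartiteResDist p q)
  rw [← resLap_completeBipartiteLapPinv hp0 hq0,
    charpoly_quotientMatrix_completeBipartiteResDist hp0 hq0, fiberCard_bipartition,
    Fin.prod_univ_two, Fin.prod_univ_two, Fintype.card_fin, Fintype.card_fin] at key
  simp only [cons_val_zero, cons_val_one] at key
  rw [← pow_sub_one_mul hp0, ← pow_sub_one_mul hq0] at key
  refine mul_left_cancel₀ (mul_ne_zero (X_sub_C_ne_zero _) (X_sub_C_ne_zero _)) (key.trans ?_)
  ring
end
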